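/- arXiv:2305.04077 — 4 statements merged into one kernel-verified Lean document; each statement's English description precedes it below -/
import Mathlib

section
/- For every rectangle $R \in \mathcal{R}_{1,N}$ (dimensions $1 \times N$) containing the diagonal point $(x,x)$, one has the pointwise bound $$\frac{1}{|R|}\int_R |f(y_1)||g(y_2)|\,dy_1\,dy_2 \leq C\,N\, Mf(x)\,Mg(x),$$ and consequently the bilinear Kakeya maximal operator $\mathcal{M}_{\mathcal{R}_{1,N}}$ maps $L^1(\mathbb{R}) \times L^1(\mathbb{R})$ into $L^{1/2,\infty}(\mathbb{R})$ with operator norm at most $C N$. -/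
open MeasureTheory Set Real
open scoped ENNReal
open scoped Pointwise

noncomputable section

/-- The rectangle with a vertex at `z`, side of length `a` along the unit vector `e`
and side of length `b` along the perpendicular vector `(-e.2, e.1)`. -/
def rectSet (e z : ℝ × ℝ) (a b : ℝ) : Set (ℝ × ℝ) :=
  (fun p : ℝ × ℝ => (z.1 + p.1 * e.1 - p.2 * e.2, z.2 + p.1 * e.2 + p.2 * e.1)) ''
    (Set.Icc 0 a ×ˢ Set.Icc 0 b)

/-- One-dimensional uncentered Hardy–Littlewood maximal function. -/
def maxHL (f : ℝ → ℝ) (x : ℝ) : ℝ≥0∞ :=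
  ⨆ (a : ℝ) (b : ℝ) (_ : a < x) (_ : x < b),
    (ENNReal.ofReal (b - a))⁻¹ * ∫⁻ y in Set.Ioo a b, ENNReal.ofReal |f y|

/-- The fixed-scale bilinear Kakeya maximal function over `1 × N` rectangles
(arbitrary orientation) containing the diagonal point `(x,x)`. -/
def bilKak (N : ℝ) (f g : ℝ → ℝ) (x : ℝ) : ℝ≥0∞ :=
  ⨆ (e : ℝ × ℝ) (z : ℝ × ℝ) (_ : e.1 ^ 2 + e.2 ^ 2 = 1)
      (_ : (x, x) ∈ rectSet e z N 1),
    (volume (rectSet e z N 1))⁻¹ *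
      ∫⁻ y in rectSet e z N 1, ENNReal.ofReal |f y.1| * ENNReal.ofReal |g y.2|

/-! ### Auxiliary lemmas -/

lemma rect_volume (e z : ℝ × ℝ) (he : e.1 ^ 2 + e.2 ^ 2 = 1) {a b : ℝ} :
    volume (rectSet e z a b) = ENNReal.ofReal a * ENNReal.ofReal b := by
  set L := Matrix.toLin (Module.Basis.finTwoProd ℝ) (Module.Basis.finTwoProd ℝ) !![e.1, -e.2; e.2, e.1] with hL
  have hmap : rectSet e z a b = z +ᵥ (L '' (Set.Icc 0 a ×ˢ Set.Icc 0 b)) := by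
    rw [← Set.image_vadd, ← Set.image_comp]
    unfold rectSet
    apply Set.image_congr'
    intro p
    simp only [Function.comp_apply, hL, Matrix.toLin_finTwoProd_apply, vadd_eq_add, Prod.ext_iff,
      Prod.fst_add, Prod.snd_add]
    constructor <;> ring
  rw [hmap, measure_vadd, MeasureTheory.Measure.addHaar_image_linearMap]
  have hdet : LinearMap.det L = 1 := by
    rw [hL, LinearMap.det_toLin, Matrix.det_fin_two_of]
    nlinarith [he]
  rw [hdet]
  simp only [abs_one, ENNReal.ofReal_one, one_mul]
  rw [Measure.volume_eq_prod, Measure.prod_prod, Real.volume_Icc, Real.volume_Icc, sub_zero,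
    sub_zero]

lemma maxHL_ge (f : ℝ → ℝ) {x a b : ℝ} (hax : a < x) (hxb : x < b) :
    (ENNReal.ofReal (b - a))⁻¹ * ∫⁻ y in Set.Ioo a b, ENNReal.ofReal |f y| ≤ maxHL f x :=
  le_iSup_of_le a (le_iSup_of_le b (le_iSup_of_le hax (le_iSup_of_le hxb le_rfl)))

lemma maxHL_eq_zero {f : ℝ → ℝ} (hf : (∫⁻ y, ENNReal.ofReal |f y|) = 0) (x : ℝ) :
    maxHL f x = 0 := by
  refine le_antisymm ?_ zero_le
  refine iSup_le fun a => iSup_le fun b => iSup_le fun _ => iSup_le fun _ => ?_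
  have h : (∫⁻ y in Set.Ioo a b, ENNReal.ofReal |f y|) = 0 :=
    le_antisymm (hf ▸ setLIntegral_le_lintegral _ _) zero_le
  rw [h, mul_zero]

/-- Weak type (1,1) bound for the one-dimensional uncentered maximal function,
with constant `8`, proved via the Vitali covering lemma. -/
lemma weakHL (f : ℝ → ℝ) {s : ℝ} (hs : 0 < s) :
    ENNReal.ofReal s * volume {x | ENNReal.ofReal s < maxHL f x} ≤
      8 * ∫⁻ y, ENNReal.ofReal |f y| := by
  set F := ∫⁻ y, ENNReal.ofReal |f y| with hFdef
  by_cases hFtop : F = ∞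
  · rw [hFtop]
    simp
  set E := {x | ENNReal.ofReal s < maxHL f x} with hE
  have key : ∀ x ∈ E, ∃ r : ℝ, 0 < r ∧ r ≤ F.toReal / s ∧
      ENNReal.ofReal (s * r) ≤ ∫⁻ y in Metric.closedBall x r, ENNReal.ofReal |f y| := by
    intro x hx
    obtain ⟨a, b, hax, hxb, hlt⟩ : ∃ a b, a < x ∧ x < b ∧
        ENNReal.ofReal s < (ENNReal.ofReal (b - a))⁻¹ * ∫⁻ y in Set.Ioo a b,
          ENNReal.ofReal |f y| := by
      have hx' := hx
      simp only [hE, mem_setOf_eq, maxHL, lt_iSup_iff] at hx'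
      obtain ⟨a, b, h1, h2, h3⟩ := hx'
      exact ⟨a, b, h1, h2, h3⟩
    have hba : (0:ℝ) < b - a := by linarith
    have h0 : ENNReal.ofReal (b - a) ≠ 0 := by
      simp only [ne_eq, ENNReal.ofReal_eq_zero, not_le]; linarith
    have htop : ENNReal.ofReal (b - a) ≠ ∞ := ENNReal.ofReal_ne_top
    have hI : ENNReal.ofReal (s * (b - a)) ≤ ∫⁻ y in Set.Ioo a b, ENNReal.ofReal |f y| := by
      have hlt2 := (ENNReal.mul_lt_mul_iff_right h0 htop).2 hlt
      rw [← mul_assoc, ENNReal.mul_inv_cancel h0 htop, one_mul] at hlt2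
      calc ENNReal.ofReal (s * (b - a)) = ENNReal.ofReal (b - a) * ENNReal.ofReal s := by
            rw [← ENNReal.ofReal_mul hba.le]; ring_nf
        _ ≤ _ := hlt2.le
    have hsub : Set.Ioo a b ⊆ Metric.closedBall x (b - a) := by
      rw [Real.closedBall_eq_Icc]
      intro y hy
      simp only [mem_Ioo] at hy
      exact ⟨by linarith [hy.1], by linarith [hy.2]⟩
    refine ⟨b - a, hba, ?_, hI.trans (lintegral_mono_set hsub)⟩
    have hIF : ENNReal.ofReal (s * (b - a)) ≤ F :=
      hI.trans (setLIntegral_le_lintegral _ _)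
    have h2 := (ENNReal.ofReal_le_iff_le_toReal hFtop).1 hIF
    rw [le_div_iff₀ hs]
    linarith [h2]
  classical
  set r : ℝ → ℝ := fun x => if h : x ∈ E then (key x h).choose else 0 with hr
  have hr_pos : ∀ x ∈ E, 0 < r x := by
    intro x hx; rw [hr]; simp only [dif_pos hx]; exact (key x hx).choose_spec.1
  have hr_le : ∀ x ∈ E, r x ≤ F.toReal / s := by
    intro x hx; rw [hr]; simp only [dif_pos hx]; exact (key x hx).choose_spec.2.1
  have hr_int : ∀ x ∈ E, ENNReal.ofReal (s * r x) ≤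
      ∫⁻ y in Metric.closedBall x (r x), ENNReal.ofReal |f y| := by
    intro x hx; rw [hr]; simp only [dif_pos hx]; exact (key x hx).choose_spec.2.2
  obtain ⟨u, hu_sub, hu_disj, hu_cover⟩ :=
    Vitali.exists_disjoint_subfamily_covering_enlargement_closedBall E id r (F.toReal / s)
      hr_le 4 (by norm_num)
  have hu_count : u.Countable := by
    apply hu_disj.countable_of_nonempty_interior
    intro y hy
    exact ⟨y, mem_interior_iff_mem_nhds.2
      (Metric.closedBall_mem_nhds _ (hr_pos y (hu_sub hy)))⟩
  have hcover : E ⊆ ⋃ y ∈ u, Metric.closedBall y (4 * r y) := by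
    intro x hx
    obtain ⟨y, hy, hsub⟩ := hu_cover x hx
    exact Set.mem_biUnion hy (hsub (Metric.mem_closedBall_self (hr_pos x hx).le))
  set ν := volume.withDensity (fun y => ENNReal.ofReal |f y|) with hν
  calc ENNReal.ofReal s * volume E
      ≤ ENNReal.ofReal s * ∑' y : u, volume (Metric.closedBall (y : ℝ) (4 * r y)) := by
        gcongr
        exact (measure_mono hcover).trans (measure_biUnion_le _ hu_count _)
    _ = ∑' y : u, ENNReal.ofReal s * ENNReal.ofReal (2 * (4 * r (y : ℝ))) := by
        rw [ENNReal.tsum_mul_left]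
        exact congrArg _ (tsum_congr fun y => by rw [Real.volume_closedBall])
    _ ≤ ∑' y : u, 8 * ν (Metric.closedBall (y : ℝ) (r y)) := by
        refine ENNReal.tsum_le_tsum fun y => ?_
        have h1 : ENNReal.ofReal s * ENNReal.ofReal (2 * (4 * r (y : ℝ))) =
            8 * ENNReal.ofReal (s * r (y : ℝ)) := by
          rw [← ENNReal.ofReal_mul hs.le]
          have h2 : s * (2 * (4 * r (y : ℝ))) = 8 * (s * r (y : ℝ)) := by ring
          rw [h2, ENNReal.ofReal_mul (by norm_num : (0:ℝ) ≤ 8)]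
          norm_num
        rw [h1]
        gcongr
        rw [hν, withDensity_apply _ measurableSet_closedBall]
        exact hr_int _ (hu_sub y.2)
    _ = 8 * ∑' y : u, ν (Metric.closedBall (y : ℝ) (r y)) := ENNReal.tsum_mul_left
    _ = 8 * ν (⋃ y ∈ u, Metric.closedBall y (r y)) := by
        congr 1
        exact (measure_biUnion hu_count hu_disj fun i _ => measurableSet_closedBall).symm
    _ ≤ 8 * ν Set.univ := mul_le_mul_right (measure_mono (Set.subset_univ _)) _
    _ = 8 * F := by
        rw [hν, withDensity_apply _ MeasurableSet.univ, Measure.restrict_univ]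

lemma rect_close {e z : ℝ × ℝ} (he : e.1 ^ 2 + e.2 ^ 2 = 1) {N : ℝ} (hN0 : 0 ≤ N) {x : ℝ}
    (hx : (x, x) ∈ rectSet e z N 1) {y : ℝ × ℝ} (hy : y ∈ rectSet e z N 1) :
    |y.1 - x| ≤ N + 1 ∧ |y.2 - x| ≤ N + 1 := by
  have he1 : |e.1| ≤ 1 := abs_le.2 ⟨by nlinarith [sq_nonneg e.2], by nlinarith [sq_nonneg e.2]⟩
  have he2 : |e.2| ≤ 1 := abs_le.2 ⟨by nlinarith [sq_nonneg e.1], by nlinarith [sq_nonneg e.1]⟩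
  obtain ⟨q, hq, hqx⟩ := hx
  obtain ⟨p, hp, hpy⟩ := hy
  simp only [Set.mem_prod, Set.mem_Icc] at hp hq
  have hx1 : z.1 + q.1 * e.1 - q.2 * e.2 = x := congrArg Prod.fst hqx
  have hx2 : z.2 + q.1 * e.2 + q.2 * e.1 = x := congrArg Prod.snd hqx
  have hy1 : z.1 + p.1 * e.1 - p.2 * e.2 = y.1 := congrArg Prod.fst hpy
  have hy2 : z.2 + p.1 * e.2 + p.2 * e.1 = y.2 := congrArg Prod.snd hpy
  have habs : ∀ a b : ℝ, |a| ≤ N → |b| ≤ 1 → |a * e.1 - b * e.2| ≤ N + 1 := by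
    intro a b ha hb
    calc |a * e.1 - b * e.2| ≤ |a * e.1| + |b * e.2| := abs_sub _ _
      _ = |a| * |e.1| + |b| * |e.2| := by rw [abs_mul, abs_mul]
      _ ≤ N * 1 + 1 * 1 := by
          apply add_le_add
          · exact mul_le_mul ha he1 (abs_nonneg _) hN0
          · exact mul_le_mul hb he2 (abs_nonneg _) zero_le_one
      _ = N + 1 := by ring
  have habs' : ∀ a b : ℝ, |a| ≤ N → |b| ≤ 1 → |a * e.2 + b * e.1| ≤ N + 1 := by
    intro a b ha hb
    calc |a * e.2 + b * e.1| ≤ |a * e.2| + |b * e.1| := abs_add_le _ _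
      _ = |a| * |e.2| + |b| * |e.1| := by rw [abs_mul, abs_mul]
      _ ≤ N * 1 + 1 * 1 := by
          apply add_le_add
          · exact mul_le_mul ha he2 (abs_nonneg _) hN0
          · exact mul_le_mul hb he1 (abs_nonneg _) zero_le_one
      _ = N + 1 := by ring
  constructor
  · have h1 : y.1 - x = (p.1 - q.1) * e.1 - (p.2 - q.2) * e.2 := by
      rw [← hy1, ← hx1]; ring
    rw [h1]
    exact habs _ _ (abs_le.2 ⟨by linarith [hp.1.1, hq.1.2], by linarith [hp.1.2, hq.1.1]⟩)
      (abs_le.2 ⟨by linarith [hp.2.1, hq.2.2], by linarith [hp.2.2, hq.2.1]⟩)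
  · have h2 : y.2 - x = (p.1 - q.1) * e.2 + (p.2 - q.2) * e.1 := by
      rw [← hy2, ← hx2]; ring
    rw [h2]
    exact habs' _ _ (abs_le.2 ⟨by linarith [hp.1.1, hq.1.2], by linarith [hp.1.2, hq.1.1]⟩)
      (abs_le.2 ⟨by linarith [hp.2.1, hq.2.2], by linarith [hp.2.2, hq.2.1]⟩)

/-- Pointwise bound with the explicit constant `16`. -/
lemma pointwise16 {N : ℝ} (hN : 2 ≤ N) (e z : ℝ × ℝ) (he : e.1 ^ 2 + e.2 ^ 2 = 1)
    (f g : ℝ → ℝ) (hf : LocallyIntegrable f volume) (hg : LocallyIntegrable g volume)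
    (x : ℝ) (hx : (x, x) ∈ rectSet e z N 1) :
    (volume (rectSet e z N 1))⁻¹ *
        (∫⁻ y in rectSet e z N 1, ENNReal.ofReal |f y.1| * ENNReal.ofReal |g y.2|) ≤
      ENNReal.ofReal (16 * N) * maxHL f x * maxHL g x := by
  have hN0 : (0:ℝ) < N := by linarith
  set c : ℝ := N + 2 with hc
  have hc0 : (0:ℝ) < c := by rw [hc]; linarith
  set I : Set ℝ := Set.Ioo (x - c) (x + c) with hI
  have hsub : rectSet e z N 1 ⊆ I ×ˢ I := by
    intro y hy
    obtain ⟨h1, h2⟩ := rect_close he hN0.le hx hy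
    have h1' := abs_le.1 h1
    have h2' := abs_le.1 h2
    refine ⟨?_, ?_⟩ <;> rw [hI] <;> simp only [mem_Ioo] <;> constructor <;>
      first
        | (rw [hc]; linarith [h1'.1, h1'.2])
        | (rw [hc]; linarith [h2'.1, h2'.2])
  have hIint : ∀ h : ℝ → ℝ, LocallyIntegrable h volume →
      (∫⁻ y in I, ENNReal.ofReal |h y|) ≤ ENNReal.ofReal (2 * c) * maxHL h x := by
    intro h hh
    have hge := maxHL_ge h (show x - c < x by linarith) (show x < x + c by linarith)
    have hbc : (x + c) - (x - c) = 2 * c := by ring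
    rw [hbc] at hge
    have h0 : ENNReal.ofReal (2 * c) ≠ 0 := by
      simp only [ne_eq, ENNReal.ofReal_eq_zero, not_le]; linarith
    calc (∫⁻ y in I, ENNReal.ofReal |h y|)
        = ENNReal.ofReal (2 * c) *
            ((ENNReal.ofReal (2 * c))⁻¹ * ∫⁻ y in I, ENNReal.ofReal |h y|) := by
          rw [← mul_assoc, ENNReal.mul_inv_cancel h0 ENNReal.ofReal_ne_top, one_mul]
      _ ≤ _ := mul_le_mul_right hge _
  have hfm : AEMeasurable (fun y => ENNReal.ofReal |f y|) (volume.restrict I) :=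
    ENNReal.measurable_ofReal.comp_aemeasurable
      (continuous_abs.measurable.comp_aemeasurable
        hf.aestronglyMeasurable.aemeasurable.restrict)
  have hgm : AEMeasurable (fun y => ENNReal.ofReal |g y|) (volume.restrict I) :=
    ENNReal.measurable_ofReal.comp_aemeasurable
      (continuous_abs.measurable.comp_aemeasurable
        hg.aestronglyMeasurable.aemeasurable.restrict)
  have hprod : (∫⁻ y in rectSet e z N 1, ENNReal.ofReal |f y.1| * ENNReal.ofReal |g y.2|)
      ≤ (∫⁻ y in I, ENNReal.ofReal |f y|) * (∫⁻ y in I, ENNReal.ofReal |g y|) := by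
    refine (lintegral_mono_set hsub).trans ?_
    rw [Measure.volume_eq_prod, ← Measure.prod_restrict]
    exact (lintegral_prod_mul hfm hgm).le
  have hvol : volume (rectSet e z N 1) = ENNReal.ofReal N := by
    rw [rect_volume e z he, ENNReal.ofReal_one, mul_one]
  rw [hvol]
  calc (ENNReal.ofReal N)⁻¹ *
      (∫⁻ y in rectSet e z N 1, ENNReal.ofReal |f y.1| * ENNReal.ofReal |g y.2|)
      ≤ (ENNReal.ofReal N)⁻¹ *
          ((ENNReal.ofReal (2 * c) * maxHL f x) * (ENNReal.ofReal (2 * c) * maxHL g x)) :=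
        mul_le_mul_right (hprod.trans (mul_le_mul' (hIint f hf) (hIint g hg))) _
    _ = ((ENNReal.ofReal N)⁻¹ * ENNReal.ofReal (4 * c ^ 2)) * maxHL f x * maxHL g x := by
        rw [show (4 * c ^ 2 : ℝ) = (2 * c) * (2 * c) by ring,
          ENNReal.ofReal_mul (by linarith : (0:ℝ) ≤ 2 * c)]
        ring
    _ ≤ ENNReal.ofReal (16 * N) * maxHL f x * maxHL g x := by
        refine mul_le_mul_left (mul_le_mul_left ?_ _) _
        have heq : (ENNReal.ofReal N)⁻¹ * ENNReal.ofReal (4 * c ^ 2) =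
            ENNReal.ofReal (4 * c ^ 2 / N) := by
          rw [ENNReal.ofReal_div_of_pos hN0, div_eq_mul_inv, mul_comm]
        rw [heq]
        apply ENNReal.ofReal_le_ofReal
        rw [div_le_iff₀ hN0]
        rw [hc]
        nlinarith
  
lemma bilKak_le {N : ℝ} (hN : 2 ≤ N) (f g : ℝ → ℝ) (hf : LocallyIntegrable f volume)
    (hg : LocallyIntegrable g volume) (x : ℝ) :
    bilKak N f g x ≤ ENNReal.ofReal (16 * N) * maxHL f x * maxHL g x :=
  iSup_le fun e => iSup_le fun z => iSup_le fun he => iSup_le fun hx =>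
    pointwise16 hN e z he f g hf hg x hx

/-- the pointwise bound `|R|⁻¹∫_R |f||g| ≤ C N Mf(x) Mg(x)` for every
`1 × N` rectangle `R` containing `(x,x)`, and the resulting weak-type
`L¹ × L¹ → L^{1/2,∞}` bound with constant `C N`. -/
theorem statement2 :
    ∃ C : ℝ, 0 < C ∧ ∀ N : ℕ, 1 < N →
      (∀ e z : ℝ × ℝ, e.1 ^ 2 + e.2 ^ 2 = 1 →
        ∀ f g : ℝ → ℝ, LocallyIntegrable f volume → LocallyIntegrable g volume →
        ∀ x : ℝ, (x, x) ∈ rectSet e z N 1 →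
          (volume (rectSet e z N 1))⁻¹ *
              (∫⁻ y in rectSet e z N 1, ENNReal.ofReal |f y.1| * ENNReal.ofReal |g y.2|) ≤
            ENNReal.ofReal (C * N) * maxHL f x * maxHL g x) ∧
      (∀ f g : ℝ → ℝ, Integrable f volume → Integrable g volume →
        ∀ lam : ℝ, 0 < lam →
          ENNReal.ofReal lam *
              (volume {x : ℝ | ENNReal.ofReal lam < bilKak N f g x}) ^ 2 ≤
            ENNReal.ofReal (C * N) * (∫⁻ y, ENNReal.ofReal |f y|) *
              ∫⁻ y, ENNReal.ofReal |g y|) := by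
  refine ⟨4096, by norm_num, fun N hN => ?_⟩
  have hN2 : (2:ℝ) ≤ (N:ℝ) := by exact_mod_cast hN
  have hN0 : (0:ℝ) < (N:ℝ) := by linarith
  constructor
  · intro e z he f g hf hg x hx
    refine (pointwise16 hN2 e z he f g hf hg x hx).trans ?_
    refine mul_le_mul_left (mul_le_mul_left (ENNReal.ofReal_le_ofReal ?_) _) _
    nlinarith
  · intro f g hf hg lam hlam
    set F := ∫⁻ y, ENNReal.ofReal |f y| with hFd
    set G := ∫⁻ y, ENNReal.ofReal |g y| with hGd
    have hFtop : F ≠ ∞ := by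
      have h : F = ∫⁻ y, (‖f y‖₊ : ℝ≥0∞) := by
        rw [hFd]; exact lintegral_congr fun y => (Real.enorm_eq_ofReal_abs _).symm
      rw [h]
      exact hf.hasFiniteIntegral.ne
    have hGtop : G ≠ ∞ := by
      have h : G = ∫⁻ y, (‖g y‖₊ : ℝ≥0∞) := by
        rw [hGd]; exact lintegral_congr fun y => (Real.enorm_eq_ofReal_abs _).symm
      rw [h]
      exact hg.hasFiniteIntegral.ne
    by_cases hF0 : F = 0
    · have hset : {x : ℝ | ENNReal.ofReal lam < bilKak (N:ℝ) f g x} = ∅ := by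
        ext x
        simp only [mem_setOf_eq, mem_empty_iff_false, iff_false, not_lt]
        have hb := bilKak_le hN2 f g hf.locallyIntegrable hg.locallyIntegrable x
        rw [maxHL_eq_zero hF0 x, mul_zero, zero_mul] at hb
        have h0 : bilKak (N:ℝ) f g x = 0 := le_antisymm hb zero_le
        rw [h0]
        exact zero_le
      rw [hset, measure_empty]
      simp
    by_cases hG0 : G = 0
    · have hset : {x : ℝ | ENNReal.ofReal lam < bilKak (N:ℝ) f g x} = ∅ := by
        ext x
        simp only [mem_setOf_eq, mem_empty_iff_false, iff_false, not_lt]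
        have hb := bilKak_le hN2 f g hf.locallyIntegrable hg.locallyIntegrable x
        rw [maxHL_eq_zero hG0 x, mul_zero] at hb
        have h0 : bilKak (N:ℝ) f g x = 0 := le_antisymm hb zero_le
        rw [h0]
        exact zero_le
      rw [hset, measure_empty]
      simp
    -- main case
    set Fr := F.toReal with hFr
    set Gr := G.toReal with hGr
    have hFr0 : 0 < Fr := ENNReal.toReal_pos hF0 hFtop
    have hGr0 : 0 < Gr := ENNReal.toReal_pos hG0 hGtop
    set t : ℝ := lam / (16 * N) with ht
    have ht0 : 0 < t := by rw [ht]; positivity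
    set w : ℝ := Real.sqrt (Fr * Gr / t) with hw
    have hw0 : 0 < w := Real.sqrt_pos.2 (by positivity)
    have hw2 : w ^ 2 = Fr * Gr / t := Real.sq_sqrt (by positivity)
    set s₁ : ℝ := Fr / w with hs₁d
    set s₂ : ℝ := Gr / w with hs₂d
    have hs₁ : 0 < s₁ := by rw [hs₁d]; positivity
    have hs₂ : 0 < s₂ := by rw [hs₂d]; positivity
    have hww : w * w = Fr * Gr / t := by rw [← sq]; exact hw2
    have hst : s₁ * s₂ = t := by
      rw [hs₁d, hs₂d, div_mul_div_comm, hww]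
      field_simp
    have hsubset : {x : ℝ | ENNReal.ofReal lam < bilKak (N:ℝ) f g x} ⊆
        {x | ENNReal.ofReal s₁ < maxHL f x} ∪ {x | ENNReal.ofReal s₂ < maxHL g x} := by
      intro x hx
      by_contra hcon
      simp only [Set.mem_union, mem_setOf_eq, not_or, not_lt] at hcon
      obtain ⟨h1, h2⟩ := hcon
      have hb := bilKak_le hN2 f g hf.locallyIntegrable hg.locallyIntegrable x
      have hb2 : bilKak (N:ℝ) f g x ≤
          ENNReal.ofReal (16 * N) * ENNReal.ofReal s₁ * ENNReal.ofReal s₂ :=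
        hb.trans (mul_le_mul' (mul_le_mul' le_rfl h1) h2)
      have heq : ENNReal.ofReal (16 * N) * ENNReal.ofReal s₁ * ENNReal.ofReal s₂ =
          ENNReal.ofReal lam := by
        rw [← ENNReal.ofReal_mul (by positivity), ← ENNReal.ofReal_mul (by positivity)]
        congr 1
        rw [mul_assoc, hst, ht]
        field_simp
      rw [heq] at hb2
      exact absurd hx (not_lt.2 hb2)
    have hmf : volume {x | ENNReal.ofReal s₁ < maxHL f x} ≤ ENNReal.ofReal (8 * w) := by
      have h := weakHL f hs₁
      have h8F : (8:ℝ≥0∞) * F = ENNReal.ofReal (8 * Fr) := by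
        rw [ENNReal.ofReal_mul (by norm_num : (0:ℝ) ≤ 8), ENNReal.ofReal_toReal hFtop]
        norm_num
      have hs₁0 : ENNReal.ofReal s₁ ≠ 0 := by
        simp only [ne_eq, ENNReal.ofReal_eq_zero, not_le]; exact hs₁
      have hdiv : volume {x | ENNReal.ofReal s₁ < maxHL f x} ≤
          ENNReal.ofReal (8 * Fr) / ENNReal.ofReal s₁ := by
        rw [ENNReal.le_div_iff_mul_le (Or.inl hs₁0) (Or.inl ENNReal.ofReal_ne_top),
          mul_comm, ← h8F]
        exact h
      refine hdiv.trans ?_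
      rw [← ENNReal.ofReal_div_of_pos hs₁]
      apply ENNReal.ofReal_le_ofReal
      rw [hs₁d]
      rw [show 8 * Fr / (Fr / w) = 8 * w by field_simp]
    have hmg : volume {x | ENNReal.ofReal s₂ < maxHL g x} ≤ ENNReal.ofReal (8 * w) := by
      have h := weakHL g hs₂
      have h8G : (8:ℝ≥0∞) * G = ENNReal.ofReal (8 * Gr) := by
        rw [ENNReal.ofReal_mul (by norm_num : (0:ℝ) ≤ 8), ENNReal.ofReal_toReal hGtop]
        norm_num
      have hs₂0 : ENNReal.ofReal s₂ ≠ 0 := by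
        simp only [ne_eq, ENNReal.ofReal_eq_zero, not_le]; exact hs₂
      have hdiv : volume {x | ENNReal.ofReal s₂ < maxHL g x} ≤
          ENNReal.ofReal (8 * Gr) / ENNReal.ofReal s₂ := by
        rw [ENNReal.le_div_iff_mul_le (Or.inl hs₂0) (Or.inl ENNReal.ofReal_ne_top),
          mul_comm, ← h8G]
        exact h
      refine hdiv.trans ?_
      rw [← ENNReal.ofReal_div_of_pos hs₂]
      apply ENNReal.ofReal_le_ofReal
      rw [hs₂d]
      rw [show 8 * Gr / (Gr / w) = 8 * w by field_simp]
    calc ENNReal.ofReal lam * (volume {x : ℝ | ENNReal.ofReal lam < bilKak (N:ℝ) f g x}) ^ 2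
        ≤ ENNReal.ofReal lam * (ENNReal.ofReal (8 * w) + ENNReal.ofReal (8 * w)) ^ 2 := by
          gcongr
          exact (measure_mono hsubset).trans
            ((measure_union_le _ _).trans (add_le_add hmf hmg))
      _ = ENNReal.ofReal (lam * (16 * w) ^ 2) := by
          rw [← ENNReal.ofReal_add (by positivity) (by positivity),
            show (8 * w + 8 * w : ℝ) = 16 * w by ring,
            ← ENNReal.ofReal_pow (by positivity), ← ENNReal.ofReal_mul hlam.le]
      _ ≤ ENNReal.ofReal (4096 * N) * F * G := by
          rw [← ENNReal.ofReal_toReal hFtop, ← ENNReal.ofReal_toReal hGtop,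
            ← ENNReal.ofReal_mul (by positivity), ← ENNReal.ofReal_mul (by positivity)]
          apply ENNReal.ofReal_le_ofReal
          have hkey : lam * (16 * w) ^ 2 = 4096 * N * Fr * Gr := by
            rw [mul_pow, hw2, ht]
            field_simp
            ring
          rw [hkey, ← hFr, ← hGr]
end
end

section
/- Let $N > 1$ be an integer and for each $i \in \mathbb{Z}$ let $R_i$ be a rectangle in the plane of dimensions $1 \times N$ whose longest side is parallel to a unit vector $e_i = (e_{i,1}, e_{i,2})$ with $|e_{i,1}| > 1/\sqrt{2}$, and such that $R_i$ intersects the diagonal segment $\{(x,x) : x \in [i - 1/2, i + 1/2)\}$. For $j = (j_1, j_2) \in \mathbb{Z}^2$ let $Q_j = [j_1 - \tfrac12, j_1 + \tfrac12) \times [j_2 - \tfrac12, j_2 + \tfrac12)$ and $\gamma_i = \{ j \in \mathbb{Z}^2 : Q_j \cap R_i \neq \emptyset \}$. Then $$\sup_{y_1 \in \mathbb{R}}\; \sum_{i \in \mathbb{Z}} \sum_{j \in \gamma_i} \chi_{[j_1 - 1/2,\, j_1 + 1/2)}(y_1) \leq C\, N,$$ with $C$ an absolute constant. -/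
open MeasureTheory Set Real
open scoped ENNReal

noncomputable section

open scoped Classical

/-- The unit square `Q_j` centered at the integer point `j`. -/
def Qsq (j : ℤ × ℤ) : Set (ℝ × ℝ) :=
  Set.Ico ((j.1 : ℝ) - 1 / 2) ((j.1 : ℝ) + 1 / 2) ×ˢ
    Set.Ico ((j.2 : ℝ) - 1 / 2) ((j.2 : ℝ) + 1 / 2)

lemma mem_rectSet' {e z : ℝ × ℝ} {a b : ℝ} {p : ℝ × ℝ} (hp : p ∈ rectSet e z a b) :
    ∃ s t : ℝ, 0 ≤ s ∧ s ≤ a ∧ 0 ≤ t ∧ t ≤ b ∧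
      p.1 = z.1 + s * e.1 - t * e.2 ∧ p.2 = z.2 + s * e.2 + t * e.1 := by
  obtain ⟨⟨s, t⟩, hst, rfl⟩ := hp
  simp only [Set.mem_prod, Set.mem_Icc] at hst
  exact ⟨s, t, hst.1.1, hst.1.2, hst.2.1, hst.2.2, rfl, rfl⟩

lemma rect_dx {e z p q : ℝ × ℝ} {N : ℝ} (hN : 0 ≤ N) (hunit : e.1 ^ 2 + e.2 ^ 2 = 1)
    (hp : p ∈ rectSet e z N 1) (hq : q ∈ rectSet e z N 1) :
    |p.1 - q.1| ≤ N + 1 := by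
  obtain ⟨s, t, hs0, hsN, ht0, ht1, hp1, _⟩ := mem_rectSet' hp
  obtain ⟨s', t', hs0', hsN', ht0', ht1', hq1, _⟩ := mem_rectSet' hq
  have h1 : |e.1| ≤ 1 := abs_le.mpr ⟨by nlinarith [sq_nonneg e.2], by nlinarith [sq_nonneg e.2]⟩
  have h2 : |e.2| ≤ 1 := abs_le.mpr ⟨by nlinarith [sq_nonneg e.1], by nlinarith [sq_nonneg e.1]⟩
  have hd : p.1 - q.1 = (s - s') * e.1 - (t - t') * e.2 := by rw [hp1, hq1]; ring
  rw [hd]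
  have hA : |(s - s') * e.1| ≤ N * 1 := by
    rw [abs_mul]
    exact mul_le_mul (abs_le.mpr ⟨by linarith, by linarith⟩) h1 (abs_nonneg _) hN
  have hB : |(t - t') * e.2| ≤ 1 * 1 := by
    rw [abs_mul]
    exact mul_le_mul (abs_le.mpr ⟨by linarith, by linarith⟩) h2 (abs_nonneg _) zero_le_one
  calc |(s - s') * e.1 - (t - t') * e.2| ≤ |(s - s') * e.1| + |(t - t') * e.2| := by
        rw [sub_eq_add_neg]
        exact (abs_add_le _ _).trans (by rw [abs_neg])
    _ ≤ N + 1 := by linarith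

lemma dy_bound {e1 e2 dx dy dt : ℝ} (hunit : e1 ^ 2 + e2 ^ 2 = 1) (he1 : 1 < 2 * e1 ^ 2)
    (hrot : dy * e1 = dt + dx * e2) (hdx2 : dx ^ 2 ≤ 1) (hdt2 : dt ^ 2 ≤ 1) :
    |dy| ≤ 6 := by
  have he2 : 2 * e2 ^ 2 ≤ 1 := by nlinarith
  have h3 : (dy * e1) ^ 2 ≤ 4 := by
    rw [hrot]
    nlinarith [sq_nonneg (dt - dx * e2),
      mul_nonneg (by nlinarith : (0:ℝ) ≤ 1 - dx ^ 2) (sq_nonneg e2)]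
  have h4 : dy ^ 2 ≤ 36 := by
    nlinarith [mul_nonneg (sq_nonneg dy) (by linarith : (0:ℝ) ≤ 2 * e1 ^ 2 - 1)]
  exact abs_le.mpr ⟨by nlinarith, by nlinarith⟩

lemma rect_dy {e z p q : ℝ × ℝ} {N : ℝ} (hunit : e.1 ^ 2 + e.2 ^ 2 = 1) (he1 : 1 < 2 * e.1 ^ 2)
    (hp : p ∈ rectSet e z N 1) (hq : q ∈ rectSet e z N 1) (hx : |p.1 - q.1| ≤ 1) :
    |p.2 - q.2| ≤ 6 := by
  obtain ⟨s, t, hs0, hsN, ht0, ht1, hp1, hp2⟩ := mem_rectSet' hp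
  obtain ⟨s', t', hs0', hsN', ht0', ht1', hq1, hq2⟩ := mem_rectSet' hq
  have hrot : (p.2 - q.2) * e.1 = (t - t') + (p.1 - q.1) * e.2 := by
    rw [hp1, hp2, hq1, hq2]; linear_combination (t - t') * hunit
  have hdx2 : (p.1 - q.1) ^ 2 ≤ 1 := by
    obtain ⟨ha, hb⟩ := abs_le.mp hx; nlinarith
  have hdt2 : (t - t') ^ 2 ≤ 1 := by nlinarith
  exact dy_bound hunit he1 hrot hdx2 hdt2

/-- if for each `i ∈ ℤ`, `R_i` is a `1 × N` rectangle whose long side is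
parallel to a unit vector `e_i` with `|e_{i,1}| > 1/√2` and which meets the diagonal
segment over `[i - 1/2, i + 1/2)`, then for every `y₁`, the number of unit squares
`Q_j` meeting some `R_i` whose first projection contains `y₁` is at most `C N`. -/
theorem statement4 :
    ∃ C : ℝ, 0 < C ∧ ∀ N : ℕ, 1 < N →
      ∀ e z : ℤ → ℝ × ℝ,
      (∀ i, (e i).1 ^ 2 + (e i).2 ^ 2 = 1) →
      (∀ i, 1 / Real.sqrt 2 < |(e i).1|) →
      (∀ i : ℤ, ∃ x : ℝ, x ∈ Set.Ico ((i : ℝ) - 1 / 2) ((i : ℝ) + 1 / 2) ∧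
        (x, x) ∈ rectSet (e i) (z i) N 1) →
      ∀ y1 : ℝ,
        (∑' i : ℤ, ∑' j : ℤ × ℤ,
            (if (Qsq j ∩ rectSet (e i) (z i) N 1).Nonempty ∧
                y1 ∈ Set.Ico ((j.1 : ℝ) - 1 / 2) ((j.1 : ℝ) + 1 / 2)
              then (1 : ℝ≥0∞) else 0)) ≤
          ENNReal.ofReal (C * N) := by

  refine ⟨200, by norm_num, ?_⟩
  intro N hN e z hunit he1 hdiag y1
  have hNR : (1:ℝ) ≤ (N:ℝ) := by exact_mod_cast hN.le
  have he1' : ∀ i, 1 < 2 * (e i).1 ^ 2 := by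
    intro i
    have h := he1 i
    have hsq : (1 / Real.sqrt 2) ^ 2 < |(e i).1| ^ 2 :=
      pow_lt_pow_left₀ h (by positivity) (by norm_num)
    rw [div_pow, one_pow, Real.sq_sqrt (by norm_num : (0:ℝ) ≤ 2), sq_abs] at hsq
    nlinarith
  set k : ℤ := ⌊y1 + 1/2⌋ with hk
  have hyk : ∀ j1 : ℤ, y1 ∈ Set.Ico ((j1:ℝ) - 1/2) ((j1:ℝ) + 1/2) → j1 = k := by
    intro j1 hj
    obtain ⟨h1, h2⟩ := hj
    have hfl : ⌊y1 + 1/2⌋ = j1 := by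
      rw [Int.floor_eq_iff]
      constructor
      · linarith
      · push_cast; linarith
    omega
  -- per-i bound
  have inner_le : ∀ i : ℤ,
      (∑' j : ℤ × ℤ,
          (if (Qsq j ∩ rectSet (e i) (z i) N 1).Nonempty ∧
              y1 ∈ Set.Ico ((j.1 : ℝ) - 1 / 2) ((j.1 : ℝ) + 1 / 2)
            then (1 : ℝ≥0∞) else 0)) ≤ 15 := by
    intro i
    by_cases hne : ∃ j : ℤ × ℤ, (Qsq j ∩ rectSet (e i) (z i) N 1).Nonempty ∧
        y1 ∈ Set.Ico ((j.1 : ℝ) - 1 / 2) ((j.1 : ℝ) + 1 / 2)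
    · obtain ⟨j0, hj0⟩ := hne
      obtain ⟨p, hpQ, hpR⟩ := hj0.1
      have hj01 : j0.1 = k := hyk j0.1 hj0.2
      simp only [Qsq, Set.mem_prod, Set.mem_Ico] at hpQ
      have hsupp : ∀ j : ℤ × ℤ,
          j ∉ (({k} : Finset ℤ) ×ˢ Finset.Icc (j0.2 - 7) (j0.2 + 7)) →
          (if (Qsq j ∩ rectSet (e i) (z i) N 1).Nonempty ∧
              y1 ∈ Set.Ico ((j.1 : ℝ) - 1 / 2) ((j.1 : ℝ) + 1 / 2)
            then (1 : ℝ≥0∞) else 0) = 0 := by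
        intro j hjF
        rw [if_neg]
        rintro ⟨⟨q, hqQ, hqR⟩, hjy⟩
        apply hjF
        have hj1 : j.1 = k := hyk j.1 hjy
        simp only [Qsq, Set.mem_prod, Set.mem_Ico] at hqQ
        have hxd : |p.1 - q.1| ≤ 1 := by
          rw [hj01] at hpQ
          rw [hj1] at hqQ
          exact abs_le.mpr ⟨by linarith [hpQ.1.1, hqQ.1.2], by linarith [hpQ.1.2, hqQ.1.1]⟩
        have hyd := rect_dy (hunit i) (he1' i) hpR hqR hxd
        obtain ⟨hyd1, hyd2⟩ := abs_le.mp hyd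
        refine Finset.mem_product.mpr ⟨Finset.mem_singleton.mpr hj1, Finset.mem_Icc.mpr ⟨?_, ?_⟩⟩
        · have : (j0.2 : ℝ) - 7 ≤ (j.2 : ℝ) := by
            linarith [hpQ.2.1, hpQ.2.2, hqQ.2.1, hqQ.2.2]
          exact_mod_cast (by push_cast; linarith : ((j0.2 - 7 : ℤ) : ℝ) ≤ ((j.2 : ℤ) : ℝ))
        · exact_mod_cast (by push_cast; linarith [hpQ.2.1, hpQ.2.2, hqQ.2.1, hqQ.2.2] :
            ((j.2 : ℤ) : ℝ) ≤ ((j0.2 + 7 : ℤ) : ℝ))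
      rw [tsum_eq_sum hsupp]
      calc (∑ j ∈ (({k} : Finset ℤ) ×ˢ Finset.Icc (j0.2 - 7) (j0.2 + 7)),
              (if (Qsq j ∩ rectSet (e i) (z i) N 1).Nonempty ∧
                  y1 ∈ Set.Ico ((j.1 : ℝ) - 1 / 2) ((j.1 : ℝ) + 1 / 2)
                then (1 : ℝ≥0∞) else 0))
          ≤ ∑ _j ∈ (({k} : Finset ℤ) ×ˢ Finset.Icc (j0.2 - 7) (j0.2 + 7)), (1 : ℝ≥0∞) :=
            Finset.sum_le_sum (fun j _ => by split <;> simp)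
        _ = ((({k} : Finset ℤ) ×ˢ Finset.Icc (j0.2 - 7) (j0.2 + 7)).card : ℝ≥0∞) := by simp
        _ ≤ 15 := by
            rw [Finset.card_product, Finset.card_singleton, Int.card_Icc]
            have h15 : (j0.2 + 7 + 1 - (j0.2 - 7)).toNat = 15 := by omega
            rw [h15]
            norm_num
    · have hz : ∀ j : ℤ × ℤ,
          (if (Qsq j ∩ rectSet (e i) (z i) N 1).Nonempty ∧
              y1 ∈ Set.Ico ((j.1 : ℝ) - 1 / 2) ((j.1 : ℝ) + 1 / 2)
            then (1 : ℝ≥0∞) else 0) = 0 := fun j => if_neg (fun h => hne ⟨j, h⟩)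
      simp only [hz, tsum_zero]
      exact zero_le
  -- outer support
  have houter : ∀ i : ℤ, i ∉ Finset.Icc (k - ((N:ℤ) + 2)) (k + ((N:ℤ) + 2)) →
      (∑' j : ℤ × ℤ,
          (if (Qsq j ∩ rectSet (e i) (z i) N 1).Nonempty ∧
              y1 ∈ Set.Ico ((j.1 : ℝ) - 1 / 2) ((j.1 : ℝ) + 1 / 2)
            then (1 : ℝ≥0∞) else 0)) = 0 := by
    intro i hiI
    have hz : ∀ j : ℤ × ℤ,
        (if (Qsq j ∩ rectSet (e i) (z i) N 1).Nonempty ∧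
            y1 ∈ Set.Ico ((j.1 : ℝ) - 1 / 2) ((j.1 : ℝ) + 1 / 2)
          then (1 : ℝ≥0∞) else 0) = 0 := by
      intro j
      rw [if_neg]
      rintro ⟨⟨q, hqQ, hqR⟩, hjy⟩
      apply hiI
      obtain ⟨x0, hx0, hx0R⟩ := hdiag i
      obtain ⟨hx0a, hx0b⟩ := hx0
      have hj1 : j.1 = k := hyk j.1 hjy
      simp only [Qsq, Set.mem_prod, Set.mem_Ico, hj1] at hqQ
      have hdx := rect_dx (by positivity) (hunit i) hx0R hqR
      simp only at hdx
      obtain ⟨hdx1, hdx2⟩ := abs_le.mp hdx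
      rw [Finset.mem_Icc]
      constructor
      · have : ((k : ℝ) - ((N:ℝ) + 2)) ≤ (i : ℝ) := by
          linarith [hqQ.1.1, hqQ.1.2]
        exact_mod_cast (by push_cast; linarith [hqQ.1.1, hqQ.1.2] :
          ((k - ((N:ℤ) + 2) : ℤ) : ℝ) ≤ ((i : ℤ) : ℝ))
      · exact_mod_cast (by push_cast; linarith [hqQ.1.1, hqQ.1.2] :
          ((i : ℤ) : ℝ) ≤ ((k + ((N:ℤ) + 2) : ℤ) : ℝ))
    simp only [hz, tsum_zero]
  rw [tsum_eq_sum houter]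
  calc (∑ i ∈ Finset.Icc (k - ((N:ℤ) + 2)) (k + ((N:ℤ) + 2)),
          ∑' j : ℤ × ℤ,
            (if (Qsq j ∩ rectSet (e i) (z i) N 1).Nonempty ∧
                y1 ∈ Set.Ico ((j.1 : ℝ) - 1 / 2) ((j.1 : ℝ) + 1 / 2)
              then (1 : ℝ≥0∞) else 0))
      ≤ ∑ _i ∈ Finset.Icc (k - ((N:ℤ) + 2)) (k + ((N:ℤ) + 2)), (15 : ℝ≥0∞) :=
        Finset.sum_le_sum (fun i _ => inner_le i)
    _ = ((Finset.Icc (k - ((N:ℤ) + 2)) (k + ((N:ℤ) + 2))).card : ℝ≥0∞) * 15 := by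
        rw [Finset.sum_const, nsmul_eq_mul]
    _ ≤ ENNReal.ofReal (200 * N) := by
        rw [Int.card_Icc]
        have hcard : (k + ((N:ℤ) + 2) + 1 - (k - ((N:ℤ) + 2))).toNat = 2 * N + 5 := by omega
        rw [hcard]
        have hof : ENNReal.ofReal (200 * (N:ℝ)) = ((200 * N : ℕ) : ℝ≥0∞) := by
          rw [← ENNReal.ofReal_natCast]
          congr 1
          push_cast
          ring
        rw [hof]
        have h15 : (15 : ℝ≥0∞) = ((15 : ℕ) : ℝ≥0∞) := by norm_num
        rw [h15, ← Nat.cast_mul]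
        exact_mod_cast Nat.cast_le.mpr (by omega : (2 * N + 5) * 15 ≤ 200 * N)
end
end

section
/- Let $R$ be a rectangle in $\mathbb{R}^2$ of dimensions $1 \times N$ whose longest side is parallel to the unit vector $e = (e_1, e_2)$. If $R$ intersects both the vertical strip $[-1/2, 1/2) \times \mathbb{R}$ and the diagonal segment $\{(x,x) : x \in [i - 1/2, i + 1/2)\}$ for some integer $i \geq 3$, then $|e_1|^{-1} \leq \frac{N}{i - 2}$. -/
/-!
Projecting onto the first axis, two points of the rectangle differ by at most
`N |e₁| + |e₂| ≤ N |e₁| + 1`, while a point of the strip and a point of the diagonal segment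
differ by more than `i - 1`. Hence `i - 2 < N |e₁|`.
-/

open MeasureTheory Set Real
open scoped ENNReal

noncomputable section

theorem fst_sub_fst_le_of_mem_rectSet {e z p q : ℝ × ℝ} {a b : ℝ}
    (hp : p ∈ rectSet e z a b) (hq : q ∈ rectSet e z a b) :
    q.1 - p.1 ≤ a * |e.1| + b * |e.2| := by
  obtain ⟨⟨s, t⟩, ⟨hs, ht⟩, rfl⟩ := hp
  obtain ⟨⟨s', t'⟩, ⟨hs', ht'⟩, rfl⟩ := hq
  have hss : |s' - s| ≤ a := abs_sub_le_of_nonneg_of_le hs'.1 hs'.2 hs.1 hs.2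
  have htt : |t - t'| ≤ b := abs_sub_le_of_nonneg_of_le ht.1 ht.2 ht'.1 ht'.2
  calc (z.1 + s' * e.1 - t' * e.2) - (z.1 + s * e.1 - t * e.2)
      = (s' - s) * e.1 + (t - t') * e.2 := by ring
    _ ≤ |s' - s| * |e.1| + |t - t'| * |e.2| := by
      rw [← abs_mul, ← abs_mul]
      exact add_le_add (le_abs_self _) (le_abs_self _)
    _ ≤ a * |e.1| + b * |e.2| := by gcongr

theorem abs_snd_le_one_of_sq_add_sq_eq_one {e : ℝ × ℝ} (he : e.1 ^ 2 + e.2 ^ 2 = 1) :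
    |e.2| ≤ 1 :=
  abs_le_one_iff_mul_self_le_one.mpr (by nlinarith [sq_nonneg e.1])

theorem statement6_general (N : ℕ) (e z : ℝ × ℝ)
    (he : e.1 ^ 2 + e.2 ^ 2 = 1) (i : ℤ) (hi : 3 ≤ i)
    (hstrip : (rectSet e z N 1 ∩
      (Set.Ico (-(1 / 2) : ℝ) (1 / 2) ×ˢ (Set.univ : Set ℝ))).Nonempty)
    (hdiag : ∃ x : ℝ, x ∈ Set.Ico ((i : ℝ) - 1 / 2) ((i : ℝ) + 1 / 2) ∧
      (x, x) ∈ rectSet e z N 1) :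
    |e.1|⁻¹ ≤ (N : ℝ) / ((i : ℝ) - 2) := by
  obtain ⟨p, hpR, ⟨-, hp1⟩, -⟩ := hstrip
  obtain ⟨x, ⟨hx, -⟩, hxR⟩ := hdiag
  have hproj := fst_sub_fst_le_of_mem_rectSet hpR hxR
  have he2 := abs_snd_le_one_of_sq_add_sq_eq_one he
  have hi2 : (0 : ℝ) < i - 2 := by
    have : (3 : ℝ) ≤ i := by exact_mod_cast hi
    linarith
  have hkey : (i : ℝ) - 2 < N * |e.1| := by
    simp only at hproj
    linarith
  have he1 : 0 < |e.1| := pos_of_mul_pos_right (hi2.trans hkey) N.cast_nonneg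
  rw [inv_eq_one_div, div_le_div_iff₀ he1 hi2]
  linarith

/-- if a `1 × N` rectangle with long side parallel to the unit vector `e`
meets both the vertical strip `[-1/2, 1/2) × ℝ` and the diagonal segment over
`[i - 1/2, i + 1/2)` for an integer `i ≥ 3`, then `|e₁|⁻¹ ≤ N / (i - 2)`. -/
theorem statement6 (N : ℕ) (hN : 1 < N) (e z : ℝ × ℝ)
    (he : e.1 ^ 2 + e.2 ^ 2 = 1) (i : ℤ) (hi : 3 ≤ i)
    (hstrip : (rectSet e z N 1 ∩
      (Set.Ico (-(1 / 2) : ℝ) (1 / 2) ×ˢ (Set.univ : Set ℝ))).Nonempty)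
    (hdiag : ∃ x : ℝ, x ∈ Set.Ico ((i : ℝ) - 1 / 2) ((i : ℝ) + 1 / 2) ∧
      (x, x) ∈ rectSet e z N 1) :
    |e.1|⁻¹ ≤ (N : ℝ) / ((i : ℝ) - 2) :=
  statement6_general N e z he i hi hstrip hdiag
end
end

section
/- Let $N \geq 8$ and define $f_N(x) = x^{-2/p_1}\chi_{[3,N]}(x)$ and $g_N(x) = x^{-2/p_2}\chi_{[3,N]}(x)$ where $1 \leq p_1, p_2 \leq \infty$, $\frac{1}{p_3} = \frac{1}{p_1} + \frac{1}{p_2}$, and $p_3 < 1$. Then $\|f_N\|_{p_1}$ and $\|g_N\|_{p_2}$ are bounded above and below by constants independent of $N$, and the bilinear Kakeya maximal function satisfies $\mathcal{M}_{\mathcal{R}_N}(f_N, g_N)(x) \geq c/x$ for all $6 < x < N-1$. Consequently $\|\mathcal{M}_{\mathcal{R}_N}(f_N,g_N)\|_{p_3}^{p_3} \geq c\, N^{1 - p_3}$, and hence $\|\mathcal{M}_{\mathcal{R}_N}\|_{L^{p_1} \times L^{p_2} \to L^{p_3}} \geq c\, N^{1/p_3 - 1}$. -/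
open MeasureTheory Set Real
open scoped ENNReal

noncomputable section

/-- The bilinear Kakeya maximal function `𝓜_{𝓡_N}` over all rectangles of dimensions
`δ × δk`, `δ > 0`, `1 ≤ k ≤ N`, containing the diagonal point `(x,x)`. -/
def bilKakN (N : ℝ) (f g : ℝ → ℝ) (x : ℝ) : ℝ≥0∞ :=
  ⨆ (k : ℕ) (_ : 1 ≤ k) (_ : (k : ℝ) ≤ N) (δ : ℝ) (_ : 0 < δ) (e : ℝ × ℝ) (z : ℝ × ℝ)
      (_ : e.1 ^ 2 + e.2 ^ 2 = 1) (_ : (x, x) ∈ rectSet e z (δ * k) δ),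
    (volume (rectSet e z (δ * k) δ))⁻¹ *
      ∫⁻ y in rectSet e z (δ * k) δ, ENNReal.ofReal |f y.1| * ENNReal.ofReal |g y.2|

def rotMap (e : ℝ × ℝ) : (ℝ × ℝ) →ₗ[ℝ] (ℝ × ℝ) where
  toFun p := (p.1 * e.1 - p.2 * e.2, p.1 * e.2 + p.2 * e.1)
  map_add' p q := by simp [Prod.ext_iff]; constructor <;> ring
  map_smul' c p := by simp [Prod.ext_iff]; constructor <;> ring

lemma det_rotMap (e : ℝ × ℝ) : LinearMap.det (rotMap e) = e.1^2 + e.2^2 := by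
  rw [← LinearMap.det_toMatrix (Module.Basis.finTwoProd ℝ) (rotMap e), Matrix.det_fin_two]
  simp [LinearMap.toMatrix_apply, rotMap, Module.Basis.finTwoProd]
  ring

lemma volume_rectSet (e z : ℝ × ℝ) (he : e.1^2 + e.2^2 = 1) (a b : ℝ) :
    volume (rectSet e z a b) = ENNReal.ofReal a * ENNReal.ofReal b := by
  have h1 : rectSet e z a b = (fun x => -z + x) ⁻¹' (rotMap e '' (Set.Icc 0 a ×ˢ Set.Icc 0 b)) := by
    ext w
    simp only [rectSet, Set.mem_image, Set.mem_preimage, rotMap, LinearMap.coe_mk, AddHom.coe_mk]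
    constructor
    · rintro ⟨p, hp, rfl⟩; exact ⟨p, hp, by simp [Prod.ext_iff]; constructor <;> ring⟩
    · rintro ⟨p, hp, hw⟩; exact ⟨p, hp, by
        have h1 := congrArg Prod.fst hw
        have h2 := congrArg Prod.snd hw
        simp at h1 h2
        simp [Prod.ext_iff]; constructor <;> linarith⟩
  rw [h1, measure_preimage_add, Measure.addHaar_image_linearMap, det_rotMap, he]
  rw [abs_one, ENNReal.ofReal_one, one_mul, Measure.volume_eq_prod, Measure.prod_prod,
    Real.volume_Icc, Real.volume_Icc, sub_zero, sub_zero]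

lemma norm_bounds (p : ℝ) (hp : 1 ≤ p) (N : ℕ) (hN : 8 ≤ N) :
    ENNReal.ofReal (5/24) ≤
      eLpNorm (fun x : ℝ => if 3 ≤ x ∧ x ≤ (N : ℝ) then x ^ (-(2 / p)) else 0)
        (ENNReal.ofReal p) volume ∧
    eLpNorm (fun x : ℝ => if 3 ≤ x ∧ x ≤ (N : ℝ) then x ^ (-(2 / p)) else 0)
        (ENNReal.ofReal p) volume ≤ ENNReal.ofReal 1 := by
  have hp0 : (0:ℝ) < p := lt_of_lt_of_le one_pos hp
  have hN3 : (3:ℝ) ≤ (N:ℝ) := by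
    have : (8:ℝ) ≤ (N:ℝ) := by exact_mod_cast hN
    linarith
  have hpne : ENNReal.ofReal p ≠ 0 := by
    simp [ENNReal.ofReal_eq_zero]; linarith
  rw [eLpNorm_eq_lintegral_rpow_enorm_toReal hpne ENNReal.ofReal_ne_top,
    ENNReal.toReal_ofReal hp0.le]
  have key : ∀ x : ℝ, (‖if 3 ≤ x ∧ x ≤ (N : ℝ) then x ^ (-(2 / p)) else 0‖ₑ) ^ p
      = Set.indicator (Set.Icc 3 (N:ℝ)) (fun x => ENNReal.ofReal (x ^ (-2:ℝ))) x := by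
    intro x
    by_cases hx : 3 ≤ x ∧ x ≤ (N:ℝ)
    · have hx0 : (0:ℝ) < x := by linarith [hx.1]
      rw [if_pos hx, Set.indicator_of_mem (by exact ⟨hx.1, hx.2⟩),
        Real.enorm_eq_ofReal (Real.rpow_nonneg hx0.le _),
        ENNReal.ofReal_rpow_of_nonneg (Real.rpow_nonneg hx0.le _) hp0.le]
      congr 1
      rw [← Real.rpow_mul hx0.le]
      congr 1
      field_simp
    · rw [if_neg hx, Set.indicator_of_notMem (by simpa [Set.mem_Icc] using hx)]
      simp [ENNReal.zero_rpow_of_pos hp0]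
  simp only [key]
  rw [lintegral_indicator measurableSet_Icc]
  have hInt : IntegrableOn (fun x : ℝ => x ^ (-2:ℝ)) (Set.Icc 3 (N:ℝ)) volume := by
    apply ContinuousOn.integrableOn_Icc
    apply ContinuousOn.rpow_const continuousOn_id
    intro x hx
    refine Or.inl ?_
    simp only [Set.mem_Icc] at hx
    simp only [id_eq]
    intro h; subst h; linarith [hx.1]
  have hval : ∫⁻ x in Set.Icc 3 (N:ℝ), ENNReal.ofReal (x ^ (-2:ℝ))
      = ENNReal.ofReal (3⁻¹ - (N:ℝ)⁻¹) := by
    rw [← ofReal_integral_eq_lintegral_ofReal hInt]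
    · congr 1
      rw [integral_Icc_eq_integral_Ioc, ← intervalIntegral.integral_of_le hN3]
      rw [integral_rpow (Or.inr ⟨by norm_num, by
        rw [Set.uIcc_of_le hN3, Set.mem_Icc]; intro h; linarith [h.1]⟩)]
      have h21 : (-2 + 1 : ℝ) = -1 := by norm_num
      rw [h21, Real.rpow_neg_one, Real.rpow_neg_one]
      ring
    · filter_upwards [self_mem_ae_restrict measurableSet_Icc] with x hx
      exact Real.rpow_nonneg (by linarith [hx.1] : (0:ℝ) ≤ x) _
  rw [hval]
  have h8 : (8:ℝ) ≤ (N:ℝ) := by exact_mod_cast hN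
  have hNinv : (N:ℝ)⁻¹ ≤ 1/8 := by
    rw [show (1:ℝ)/8 = 8⁻¹ by norm_num]
    exact inv_anti₀ (by norm_num) h8
  have hV1 : (5/24 : ℝ) ≤ 3⁻¹ - (N:ℝ)⁻¹ := by linarith
  have hV2 : (3⁻¹ - (N:ℝ)⁻¹ : ℝ) ≤ 1 := by
    have : (0:ℝ) ≤ (N:ℝ)⁻¹ := by positivity
    linarith
  have hV0 : (0:ℝ) < 3⁻¹ - (N:ℝ)⁻¹ := by linarith
  rw [ENNReal.ofReal_rpow_of_nonneg hV0.le (by positivity : (0:ℝ) ≤ 1/p)]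
  constructor
  · apply ENNReal.ofReal_le_ofReal
    calc (5/24:ℝ) ≤ 3⁻¹ - (N:ℝ)⁻¹ := hV1
    _ ≤ (3⁻¹ - (N:ℝ)⁻¹) ^ (1/p) := by
        have := Real.rpow_le_rpow_of_exponent_ge hV0 hV2
          (by rw [div_le_one hp0]; linarith : 1/p ≤ 1)
        simpa using this
  · apply ENNReal.ofReal_le_ofReal
    exact Real.rpow_le_one hV0.le hV2 (by positivity)

lemma measurableSet_rectSet (e z : ℝ × ℝ) (a b : ℝ) : MeasurableSet (rectSet e z a b) := by
  apply IsCompact.measurableSet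
  apply IsCompact.image (isCompact_Icc.prod isCompact_Icc)
  fun_prop

lemma rectSet_subset (e z : ℝ × ℝ) (s0 a b A B : ℝ) (hs0 : 0 ≤ s0) (ha : 0 ≤ a) (hab : s0 + a ≤ A)
    (hb : b ≤ B) :
    rectSet e (z.1 + s0 * e.1, z.2 + s0 * e.2) a b ⊆ rectSet e z A B := by
  rintro w ⟨p, ⟨⟨hp1, hp2⟩, hp3, hp4⟩, rfl⟩
  refine ⟨(s0 + p.1, p.2), ⟨⟨by constructor <;> simp <;> linarith, by constructor <;> linarith⟩, ?_⟩⟩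
  simp only [Prod.ext_iff]
  constructor <;> ring

lemma rpow_inv_bound (p y : ℝ) (hp : 1 ≤ p) (h3 : 3 ≤ y) (h4 : y ≤ 4) :
    1/16 ≤ y ^ (-(2/p)) := by
  have hy0 : (0:ℝ) < y := by linarith
  have h1 : y ^ ((2:ℝ)/p) ≤ 16 := by
    calc y ^ ((2:ℝ)/p) ≤ y ^ (2:ℝ) := by
          apply Real.rpow_le_rpow_of_exponent_le (by linarith)
          rw [div_le_iff₀ (by linarith : (0:ℝ) < p)]
          nlinarith
    _ ≤ (4:ℝ) ^ (2:ℝ) := by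
          apply Real.rpow_le_rpow hy0.le h4 (by norm_num)
    _ = 16 := by
          rw [show (2:ℝ) = ((2:ℕ):ℝ) by norm_num, Real.rpow_natCast]; norm_num
  have h2 : (0:ℝ) < y ^ ((2:ℝ)/p) := Real.rpow_pos_of_pos hy0 _
  rw [Real.rpow_neg hy0.le]
  calc (1:ℝ)/16 = 16⁻¹ := by norm_num
  _ ≤ (y ^ ((2:ℝ)/p))⁻¹ := inv_anti₀ h2 h1

set_option maxHeartbeats 2000000 in
lemma pointwise_bound (p1 p2 : ℝ) (hp1 : 1 ≤ p1) (hp2 : 1 ≤ p2) (N : ℕ) (hN : 8 ≤ N)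
    (x : ℝ) (hx6 : 6 < x) (hxN : x < (N:ℝ) - 1) :
    ENNReal.ofReal ((1/2560) / x) ≤
      bilKakN N (fun y : ℝ => if 3 ≤ y ∧ y ≤ (N : ℝ) then y ^ (-(2 / p1)) else 0)
        (fun y : ℝ => if 3 ≤ y ∧ y ≤ (N : ℝ) then y ^ (-(2 / p2)) else 0) x := by
  set s2 := Real.sqrt 2 with hs2def
  have hs2sq : s2 ^ 2 = 2 := Real.sq_sqrt (by norm_num)
  have hs2pos : 0 < s2 := Real.sqrt_pos.mpr (by norm_num)
  have h14 : 1.4 ≤ s2 := by nlinarith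
  have h142 : s2 ≤ 1.42 := by nlinarith
  set e : ℝ × ℝ := (s2/2, s2/2) with hedef
  have he : e.1 ^ 2 + e.2 ^ 2 = 1 := by
    show (s2/2) ^ 2 + (s2/2) ^ 2 = 1
    rw [div_pow, hs2sq]
    norm_num
  set k : ℕ := ⌈x⌉₊ with hkdef
  have hk1 : 1 ≤ k := by
    have : 0 < k := Nat.ceil_pos.mpr (by linarith)
    omega
  have hxk : x ≤ (k:ℝ) := Nat.le_ceil x
  have hkx1 : (k:ℝ) < x + 1 := Nat.ceil_lt_add_one (by linarith)
  have hkN : (k:ℝ) ≤ (N:ℝ) := by linarith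
  have hkpos : (0:ℝ) < k := by linarith
  set δ : ℝ := s2 * (x - 3) / k with hδdef
  have hδpos : 0 < δ := by
    apply div_pos (by nlinarith) hkpos
  have hL : δ * k = s2 * (x - 3) := by
    rw [hδdef, div_mul_cancel₀ _ (ne_of_gt hkpos)]
  have hδ25 : 2/5 ≤ δ := by
    rw [hδdef, le_div_iff₀ hkpos]
    nlinarith
  set z : ℝ × ℝ := ((3:ℝ), (3:ℝ)) with hzdef
  have hmem : (x, x) ∈ rectSet e z (δ * k) δ := by
    refine ⟨(s2 * (x - 3), 0), ?_, ?_⟩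
    · simp only [Set.mem_prod, Set.mem_Icc]
      exact ⟨⟨by nlinarith, by rw [hL]⟩, le_refl 0, hδpos.le⟩
    · show ((3:ℝ) + s2 * (x-3) * (s2/2) - 0 * (s2/2), (3:ℝ) + s2 * (x-3) * (s2/2) + 0 * (s2/2)) = (x, x)
      rw [Prod.mk.injEq]
      constructor <;> nlinarith
  have h4N : (4:ℝ) ≤ (N:ℝ) := by
    have : (8:ℝ) ≤ (N:ℝ) := by exact_mod_cast hN
    linarith
  set z' : ℝ × ℝ := (z.1 + (2/5) * e.1, z.2 + (2/5) * e.2) with hz'def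
  have hSsub : rectSet e z' (1/2) (2/5) ⊆ rectSet e z (δ * k) δ :=
    rectSet_subset e z (2/5) (1/2) (2/5) (δ * k) δ (by norm_num) (by norm_num)
      (by rw [hL]; nlinarith) hδ25
  have hcoord : ∀ q : ℝ × ℝ, q ∈ Set.Icc (0:ℝ) (1/2) ×ˢ Set.Icc (0:ℝ) (2/5) →
      (3 ≤ z'.1 + q.1 * e.1 - q.2 * e.2 ∧ z'.1 + q.1 * e.1 - q.2 * e.2 ≤ 4) ∧
      (3 ≤ z'.2 + q.1 * e.2 + q.2 * e.1 ∧ z'.2 + q.1 * e.2 + q.2 * e.1 ≤ 4) := by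
    rintro q hq
    simp only [Set.mem_prod, Set.mem_Icc] at hq
    obtain ⟨⟨h1, h2⟩, h3, h4⟩ := hq
    have hz1 : z'.1 = 3 + (2/5) * (s2/2) := rfl
    have hz2 : z'.2 = 3 + (2/5) * (s2/2) := rfl
    have he1 : e.1 = s2/2 := rfl
    have he2 : e.2 = s2/2 := rfl
    rw [hz1, hz2, he1, he2]
    have hu1 : (0:ℝ) ≤ s2/2 := by linarith
    have hu2 : s2/2 ≤ 0.71 := by linarith
    have k1 : (0:ℝ) ≤ (s2/2) * (2/5 + q.1 - q.2) := mul_nonneg hu1 (by linarith)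
    have k2 : (s2/2) * (2/5 + q.1 - q.2) ≤ 0.71 * (9/10) :=
      mul_le_mul hu2 (by linarith) (by linarith) (by norm_num)
    have k3 : (0:ℝ) ≤ (s2/2) * (2/5 + q.1 + q.2) := mul_nonneg hu1 (by linarith)
    have k4 : (s2/2) * (2/5 + q.1 + q.2) ≤ 0.71 * (13/10) :=
      mul_le_mul hu2 (by linarith) (by linarith) (by norm_num)
    constructor <;> constructor <;> nlinarith
  have hFS : ∀ y : ℝ × ℝ, y ∈ rectSet e z' (1/2) (2/5) →
      ENNReal.ofReal (1/256) ≤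
        ENNReal.ofReal |(fun w : ℝ => if 3 ≤ w ∧ w ≤ (N:ℝ) then w ^ (-(2/p1)) else 0) y.1| *
        ENNReal.ofReal |(fun w : ℝ => if 3 ≤ w ∧ w ≤ (N:ℝ) then w ^ (-(2/p2)) else 0) y.2| := by
    rintro y ⟨q, hq, rfl⟩
    obtain ⟨⟨ha1, ha2⟩, hb1, hb2⟩ := hcoord q hq
    dsimp only
    rw [if_pos ⟨ha1, ha2.trans h4N⟩, if_pos ⟨hb1, hb2.trans h4N⟩]
    rw [abs_of_nonneg (Real.rpow_nonneg
        (show (0:ℝ) ≤ z'.1 + q.1 * e.1 - q.2 * e.2 by linarith) _),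
      abs_of_nonneg (Real.rpow_nonneg
        (show (0:ℝ) ≤ z'.2 + q.1 * e.2 + q.2 * e.1 by linarith) _)]
    have q1 := rpow_inv_bound p1 _ hp1 ha1 ha2
    have q2 := rpow_inv_bound p2 _ hp2 hb1 hb2
    calc ENNReal.ofReal (1/256) = ENNReal.ofReal (1/16) * ENNReal.ofReal (1/16) := by
          rw [← ENNReal.ofReal_mul (by norm_num)]; norm_num
    _ ≤ _ := mul_le_mul' (ENNReal.ofReal_le_ofReal q1) (ENNReal.ofReal_le_ofReal q2)
  have hIntLower : ENNReal.ofReal (1/1280) ≤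
      ∫⁻ y in rectSet e z (δ * k) δ,
        ENNReal.ofReal |(fun w : ℝ => if 3 ≤ w ∧ w ≤ (N:ℝ) then w ^ (-(2/p1)) else 0) y.1| *
        ENNReal.ofReal |(fun w : ℝ => if 3 ≤ w ∧ w ≤ (N:ℝ) then w ^ (-(2/p2)) else 0) y.2| := by
    refine le_trans ?_ (lintegral_mono_set hSsub)
    have hv : ENNReal.ofReal (1/256) * volume (rectSet e z' (1/2) (2/5)) =
        ENNReal.ofReal (1/1280) := by
      rw [volume_rectSet e z' he (1/2) (2/5), ← ENNReal.ofReal_mul (by norm_num),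
        ← ENNReal.ofReal_mul (by norm_num)]
      norm_num
    rw [← hv, ← setLIntegral_const]
    exact setLIntegral_mono' (measurableSet_rectSet e z' (1/2) (2/5)) hFS
  have hA : δ * ↑k * δ * ↑k = 2 * (x-3)^2 := by
    have : δ * ↑k * δ * ↑k = (δ * ↑k) * (δ * ↑k) := by ring
    rw [this, hL]
    nlinarith
  have hApos : 0 < δ * ↑k * δ := by positivity
  have hA2x : δ * ↑k * δ ≤ 2 * x := by
    have h1 : δ * ↑k * δ * ↑k ≤ 2 * x * ↑k := by
      rw [hA]; nlinarith
    exact le_of_mul_le_mul_right h1 hkpos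
  have hreal : (1:ℝ)/2560 / x ≤ (δ * ↑k * δ)⁻¹ * (1/1280) := by
    have hx0 : (0:ℝ) < x := by linarith
    have hinv : (2*x)⁻¹ ≤ (δ * ↑k * δ)⁻¹ := inv_anti₀ hApos hA2x
    calc (1:ℝ)/2560 / x = (2*x)⁻¹ * (1/1280) := by field_simp; ring
    _ ≤ (δ * ↑k * δ)⁻¹ * (1/1280) := by
        apply mul_le_mul_of_nonneg_right hinv (by norm_num)
  have hfinal : ENNReal.ofReal ((1/2560) / x) ≤
      (volume (rectSet e z (δ * ↑k) δ))⁻¹ *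
        ∫⁻ y in rectSet e z (δ * ↑k) δ,
          ENNReal.ofReal |(fun w : ℝ => if 3 ≤ w ∧ w ≤ (N:ℝ) then w ^ (-(2/p1)) else 0) y.1| *
          ENNReal.ofReal |(fun w : ℝ => if 3 ≤ w ∧ w ≤ (N:ℝ) then w ^ (-(2/p2)) else 0) y.2| := by
    have hvolR : volume (rectSet e z (δ * ↑k) δ) = ENNReal.ofReal (δ * ↑k * δ) := by
      rw [volume_rectSet e z he, ← ENNReal.ofReal_mul (by positivity)]
    calc ENNReal.ofReal ((1/2560) / x)
        ≤ ENNReal.ofReal ((δ * ↑k * δ)⁻¹ * (1/1280)) := ENNReal.ofReal_le_ofReal hreal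
    _ = (ENNReal.ofReal (δ * ↑k * δ))⁻¹ * ENNReal.ofReal (1/1280) := by
        rw [ENNReal.ofReal_mul (by positivity), ENNReal.ofReal_inv_of_pos hApos]
    _ ≤ _ := by
        rw [hvolR]
        exact mul_le_mul' le_rfl hIntLower
  refine le_trans hfinal ?_
  rw [bilKakN]
  apply le_iSup_of_le k
  apply le_iSup_of_le hk1
  apply le_iSup_of_le hkN
  apply le_iSup_of_le δ
  apply le_iSup_of_le hδpos
  apply le_iSup_of_le e
  apply le_iSup_of_le z
  apply le_iSup_of_le he
  apply le_iSup_of_le hmem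
  exact le_rfl

set_option maxHeartbeats 1000000 in
/-- for the test functions `f_N(x) = x^{-2/p₁} χ_{[3,N]}` and
`g_N(x) = x^{-2/p₂} χ_{[3,N]}` (whose norms are bounded above and below uniformly in `N`),
one has `𝓜_{𝓡_N}(f_N,g_N)(x) ≥ c/x` for `6 < x < N-1`, hence
`‖𝓜_{𝓡_N}(f_N,g_N)‖_{p₃}^{p₃} ≥ c N^{1-p₃}` and the operator norm lower bound
`c N^{1/p₃ - 1}`. -/
theorem statement12 (p1 p2 p3 : ℝ) (hp1 : 1 ≤ p1) (hp2 : 1 ≤ p2)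
    (hp3pos : 0 < p3) (hp3 : p3 < 1) (hHolder : 1 / p3 = 1 / p1 + 1 / p2) :
    ∃ c : ℝ, 0 < c ∧ ∃ Cu : ℝ, 0 < Cu ∧ ∀ N : ℕ, 8 ≤ N →
      ∀ f g : ℝ → ℝ,
      f = (fun x : ℝ => if 3 ≤ x ∧ x ≤ (N : ℝ) then x ^ (-(2 / p1)) else 0) →
      g = (fun x : ℝ => if 3 ≤ x ∧ x ≤ (N : ℝ) then x ^ (-(2 / p2)) else 0) →
      (ENNReal.ofReal c ≤ eLpNorm f (ENNReal.ofReal p1) volume ∧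
        eLpNorm f (ENNReal.ofReal p1) volume ≤ ENNReal.ofReal Cu) ∧
      (ENNReal.ofReal c ≤ eLpNorm g (ENNReal.ofReal p2) volume ∧
        eLpNorm g (ENNReal.ofReal p2) volume ≤ ENNReal.ofReal Cu) ∧
      (∀ x : ℝ, 6 < x → x < (N : ℝ) - 1 →
        ENNReal.ofReal (c / x) ≤ bilKakN N f g x) ∧
      ENNReal.ofReal (c * (N : ℝ) ^ (1 - p3)) ≤ (∫⁻ x, bilKakN N f g x ^ p3) ∧
      ENNReal.ofReal (c * (N : ℝ) ^ (1 / p3 - 1)) *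
          eLpNorm f (ENNReal.ofReal p1) volume * eLpNorm g (ENNReal.ofReal p2) volume ≤
        (∫⁻ x, bilKakN N f g x ^ p3) ^ (1 / p3) := by
  set c2 : ℝ := ((1/2560 : ℝ) ^ p3) / 8 with hc2def
  have hc2pos : 0 < c2 := by
    apply div_pos (Real.rpow_pos_of_pos (by norm_num) _) (by norm_num)
  set c : ℝ := min (min (5/24) (1/2560)) (min c2 (c2 ^ (1/p3))) with hcdef
  have hcpos : 0 < c := lt_min (lt_min (by norm_num) (by norm_num))
    (lt_min hc2pos (Real.rpow_pos_of_pos hc2pos _))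
  refine ⟨c, hcpos, 1, one_pos, ?_⟩
  intro N hN f g hf hg
  subst hf; subst hg
  have hc524 : c ≤ 5/24 := le_trans (min_le_left _ _) (min_le_left _ _)
  have hc2560 : c ≤ 1/2560 := le_trans (min_le_left _ _) (min_le_right _ _)
  have hcc2 : c ≤ c2 := le_trans (min_le_right _ _) (min_le_left _ _)
  have hcc2p : c ≤ c2 ^ (1/p3) := le_trans (min_le_right _ _) (min_le_right _ _)
  have hN8 : (8:ℝ) ≤ (N:ℝ) := by exact_mod_cast hN
  have hN0 : (0:ℝ) < (N:ℝ) := by linarith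
  obtain ⟨hf1, hf2⟩ := norm_bounds p1 hp1 N hN
  obtain ⟨hg1, hg2⟩ := norm_bounds p2 hp2 N hN
  have hpt : ∀ x : ℝ, 6 < x → x < (N : ℝ) - 1 →
      ENNReal.ofReal (c / x) ≤
        bilKakN N (fun y : ℝ => if 3 ≤ y ∧ y ≤ (N : ℝ) then y ^ (-(2 / p1)) else 0)
          (fun y : ℝ => if 3 ≤ y ∧ y ≤ (N : ℝ) then y ^ (-(2 / p2)) else 0) x := by
    intro x hx6 hxN
    refine le_trans (ENNReal.ofReal_le_ofReal ?_) (pointwise_bound p1 p2 hp1 hp2 N hN x hx6 hxN)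
    have hx0 : (0:ℝ) < x := by linarith
    gcongr
  set 𝓜 := bilKakN N (fun y : ℝ => if 3 ≤ y ∧ y ≤ (N : ℝ) then y ^ (-(2 / p1)) else 0)
      (fun y : ℝ => if 3 ≤ y ∧ y ≤ (N : ℝ) then y ^ (-(2 / p2)) else 0) with h𝓜
  -- the key integral lower bound with constant c2
  have hI : ENNReal.ofReal (c2 * (N:ℝ) ^ (1 - p3)) ≤ ∫⁻ x, 𝓜 x ^ p3 := by
    have hP : (0:ℝ) < (N:ℝ) ^ p3 := Real.rpow_pos_of_pos hN0 _
    have hreal : c2 * (N:ℝ) ^ (1 - p3) ≤ (1/2560/(N:ℝ)) ^ p3 * ((N:ℝ) - 1 - 6) := by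
      have key : c2 * (N:ℝ) ≤ (1/2560 : ℝ) ^ p3 * ((N:ℝ) - 7) := by
        rw [hc2def]
        have hB : (0:ℝ) < (1/2560 : ℝ) ^ p3 := Real.rpow_pos_of_pos (by norm_num) _
        nlinarith
      calc c2 * (N:ℝ) ^ (1 - p3) = (c2 * (N:ℝ)) / (N:ℝ) ^ p3 := by
            rw [Real.rpow_sub hN0, Real.rpow_one]; ring
      _ ≤ ((1/2560 : ℝ) ^ p3 * ((N:ℝ) - 7)) / (N:ℝ) ^ p3 := by
            exact div_le_div_of_nonneg_right key hP.le
      _ = (1/2560/(N:ℝ)) ^ p3 * ((N:ℝ) - 1 - 6) := by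
            rw [Real.div_rpow (by norm_num) hN0.le]; ring
    calc ENNReal.ofReal (c2 * (N:ℝ) ^ (1 - p3))
        ≤ ENNReal.ofReal ((1/2560/(N:ℝ)) ^ p3 * ((N:ℝ) - 1 - 6)) :=
          ENNReal.ofReal_le_ofReal hreal
    _ = ENNReal.ofReal ((1/2560/(N:ℝ)) ^ p3) * volume (Set.Ioo (6:ℝ) ((N:ℝ) - 1)) := by
          rw [Real.volume_Ioo, ← ENNReal.ofReal_mul (by positivity)]
    _ = ∫⁻ x in Set.Ioo (6:ℝ) ((N:ℝ) - 1), ENNReal.ofReal ((1/2560/(N:ℝ)) ^ p3) :=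
          (setLIntegral_const _ _).symm
    _ ≤ ∫⁻ x in Set.Ioo (6:ℝ) ((N:ℝ) - 1), 𝓜 x ^ p3 := by
          apply setLIntegral_mono' measurableSet_Ioo
          intro x hx
          obtain ⟨hx6, hxN⟩ := hx
          calc ENNReal.ofReal ((1/2560/(N:ℝ)) ^ p3)
              = ENNReal.ofReal (1/2560/(N:ℝ)) ^ p3 :=
                (ENNReal.ofReal_rpow_of_nonneg (by positivity) hp3pos.le).symm
          _ ≤ ENNReal.ofReal (1/2560/x) ^ p3 := by
                apply ENNReal.rpow_le_rpow _ hp3pos.le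
                apply ENNReal.ofReal_le_ofReal
                gcongr <;> linarith
          _ ≤ 𝓜 x ^ p3 :=
                ENNReal.rpow_le_rpow (pointwise_bound p1 p2 hp1 hp2 N hN x hx6 hxN) hp3pos.le
    _ ≤ ∫⁻ x, 𝓜 x ^ p3 := setLIntegral_le_lintegral _ _
  refine ⟨⟨le_trans (ENNReal.ofReal_le_ofReal hc524) hf1, by simpa using hf2⟩,
    ⟨le_trans (ENNReal.ofReal_le_ofReal hc524) hg1, by simpa using hg2⟩, hpt, ?_, ?_⟩
  · exact le_trans (ENNReal.ofReal_le_ofReal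
      (mul_le_mul_of_nonneg_right hcc2 (Real.rpow_nonneg hN0.le _))) hI
  · have hup : ENNReal.ofReal (c * (N:ℝ) ^ (1/p3 - 1)) *
        eLpNorm (fun x : ℝ => if 3 ≤ x ∧ x ≤ (N : ℝ) then x ^ (-(2 / p1)) else 0)
          (ENNReal.ofReal p1) volume *
        eLpNorm (fun x : ℝ => if 3 ≤ x ∧ x ≤ (N : ℝ) then x ^ (-(2 / p2)) else 0)
          (ENNReal.ofReal p2) volume ≤ ENNReal.ofReal (c * (N:ℝ) ^ (1/p3 - 1)) := by
      calc _ ≤ ENNReal.ofReal (c * (N:ℝ) ^ (1/p3 - 1)) * ENNReal.ofReal 1 * ENNReal.ofReal 1 :=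
            mul_le_mul' (mul_le_mul' le_rfl hf2) hg2
      _ = ENNReal.ofReal (c * (N:ℝ) ^ (1/p3 - 1)) := by
            rw [ENNReal.ofReal_one, mul_one, mul_one]
    refine le_trans hup ?_
    calc ENNReal.ofReal (c * (N:ℝ) ^ (1/p3 - 1))
        ≤ ENNReal.ofReal (c2 ^ (1/p3) * (N:ℝ) ^ (1/p3 - 1)) := by
          apply ENNReal.ofReal_le_ofReal
          exact mul_le_mul_of_nonneg_right hcc2p (Real.rpow_nonneg hN0.le _)
    _ = ENNReal.ofReal ((c2 * (N:ℝ) ^ (1 - p3)) ^ (1/p3)) := by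
          congr 1
          rw [Real.mul_rpow hc2pos.le (Real.rpow_nonneg hN0.le _), ← Real.rpow_mul hN0.le]
          congr 1
          field_simp
    _ = ENNReal.ofReal (c2 * (N:ℝ) ^ (1 - p3)) ^ (1/p3) :=
          (ENNReal.ofReal_rpow_of_nonneg (by positivity) (by positivity)).symm
    _ ≤ (∫⁻ x, 𝓜 x ^ p3) ^ (1/p3) := ENNReal.rpow_le_rpow hI (by positivity)
end
end
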